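/- Let (X,T) be a topological dynamical system. If (X,T) is logarithmically mean equicontinuous, then for every x ∈ X the subsystem (cl(orb(x,T)), T), where cl(orb(x,T)) is the closure of the orbit {Tⁿx : n ≥ 0}, is uniquely ergodic. -/

import Mathlib

/-!
Write `S` for `T` restricted to `Y = cl(orb(x,T))`, so that the orbit of `x` is dense in `Y`.
Fix a continuous `g` and a point `y`; choose `m` with `Tᵐx` close to `y`. Logarithmic mean
equicontinuity makes the logarithmic averages of `g` along the orbits of `y` and of `Tᵐx`
eventually close, and shifting an orbit by `m` steps changes a logarithmic average by
`O(m / H_n) → 0`. So the averages along every orbit are asymptotic to those along the orbit of `x`;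
integrating against an invariant `ν` (dominated convergence) shows that the averages along the
orbit of `x` converge to `∫ g dν`, which therefore does not depend on `ν`. An invariant measure
exists by the Krylov–Bogolyubov argument with logarithmic weights: any weak-* cluster point of
`(1/H_n) ∑_{k<n} δ_{Sᵏx}/(k+1)` is invariant.
-/

open Filter MeasureTheory Topology

/-- The `n`-th harmonic number `H_n = ∑_{k=1}^n 1/k` as a real number. -/
noncomputable def H (n : ℕ) : ℝ := ∑ k ∈ Finset.range n, (1 : ℝ) / (k + 1)

/-- A TDS `(X,T)` is logarithmically mean equicontinuous if for every `ε > 0` there is `δ > 0`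
such that `d(x,y) < δ` implies
`limsup_n (1/H_n) ∑_{k=1}^n (1/k) d(T^{k-1}x, T^{k-1}y) < ε`. -/
def LogMeanEquicontinuous {X : Type*} [MetricSpace X] (T : X → X) : Prop :=
  ∀ ε > (0 : ℝ), ∃ δ > (0 : ℝ), ∀ x y : X, dist x y < δ →
    limsup (fun n : ℕ =>
      (1 / H n) * ∑ k ∈ Finset.range n, (1 / (k + 1 : ℝ)) * dist (T^[k] x) (T^[k] y)) atTop < ε

/-- The orbit closure `cl {Tⁿx : n ≥ 0}` of a point `x`. -/
def orbitClosure {X : Type*} [TopologicalSpace X] (T : X → X) (x : X) : Set X :=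
  closure (Set.range fun n : ℕ => T^[n] x)

/-- The orbit closure is `T`-invariant, so `(cl(orb(x,T)), T)` is a subsystem. -/
theorem orbitClosure_mapsTo {X : Type*} [TopologicalSpace X] {T : X → X}
    (hT : Continuous T) (x : X) :
    Set.MapsTo T (orbitClosure T x) (orbitClosure T x) := by
  have h1 : Set.MapsTo T (Set.range fun n : ℕ => T^[n] x)
      (Set.range fun n : ℕ => T^[n] x) := by
    rintro _ ⟨n, rfl⟩
    exact ⟨n + 1, Function.iterate_succ_apply' T n x⟩
  rw [Set.mapsTo_iff_image_subset]
  calc T '' orbitClosure T x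
      ⊆ closure (T '' Set.range fun n : ℕ => T^[n] x) :=
        image_closure_subset_closure_image hT
    _ ⊆ orbitClosure T x := closure_mono (Set.mapsTo_iff_image_subset.mp h1)

open scoped BoundedContinuousFunction

section LogAverage

lemma H_nonneg (n : ℕ) : 0 ≤ H n :=
  Finset.sum_nonneg fun _ _ => by positivity

lemma H_pos {n : ℕ} (hn : n ≠ 0) : 0 < H n :=
  Finset.sum_pos (fun _ _ => by positivity) (Finset.nonempty_range_iff.mpr hn)

lemma tendsto_H_atTop : Tendsto H atTop atTop :=
  Real.tendsto_sum_range_one_div_nat_succ_atTop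

/-- Junk value: `logAvg a 0 = 0`, since `H 0 = 0`. -/
noncomputable def logAvg (a : ℕ → ℝ) (n : ℕ) : ℝ :=
  (1 / H n) * ∑ k ∈ Finset.range n, (1 / (k + 1 : ℝ)) * a k

lemma logAvg_add (a b : ℕ → ℝ) (n : ℕ) :
    logAvg (fun k => a k + b k) n = logAvg a n + logAvg b n := by
  simp only [logAvg, mul_add, Finset.sum_add_distrib]

lemma logAvg_sub (a b : ℕ → ℝ) (n : ℕ) :
    logAvg (fun k => a k - b k) n = logAvg a n - logAvg b n := by
  simp only [logAvg, mul_sub, Finset.sum_sub_distrib]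

lemma logAvg_const_mul (c : ℝ) (a : ℕ → ℝ) (n : ℕ) :
    logAvg (fun k => c * a k) n = c * logAvg a n := by
  simp only [logAvg, Finset.mul_sum]
  exact Finset.sum_congr rfl fun _ _ => by ring

lemma logAvg_const {n : ℕ} (hn : n ≠ 0) (c : ℝ) : logAvg (fun _ => c) n = c := by
  rw [logAvg, ← Finset.sum_mul]
  field_simp [(H_pos hn).ne']
  rfl

lemma logAvg_mono {a b : ℕ → ℝ} (hab : ∀ k, a k ≤ b k) (n : ℕ) : logAvg a n ≤ logAvg b n := by
  have := H_nonneg n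
  unfold logAvg
  gcongr with k
  exact hab k

lemma abs_logAvg_le (a : ℕ → ℝ) (n : ℕ) : |logAvg a n| ≤ logAvg (fun k => |a k|) n := by
  have := H_nonneg n
  unfold logAvg
  rw [abs_mul, abs_of_nonneg (by positivity)]
  gcongr
  refine (Finset.abs_sum_le_sum_abs _ _).trans_eq (Finset.sum_congr rfl fun k _ => ?_)
  rw [abs_mul, abs_of_pos (by positivity)]

lemma abs_logAvg_le_of_abs_le {a : ℕ → ℝ} {M : ℝ} (ha : ∀ k, |a k| ≤ M) (n : ℕ) :
    |logAvg a n| ≤ M := by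
  rcases eq_or_ne n 0 with rfl | hn
  · simpa [logAvg] using (abs_nonneg _).trans (ha 0)
  · exact (abs_logAvg_le a n).trans ((logAvg_mono ha n).trans_eq (logAvg_const hn M))

lemma abs_logAvg_succ_sub_le {a : ℕ → ℝ} {M : ℝ} (ha : ∀ k, |a k| ≤ M) (n : ℕ) :
    |logAvg (fun k => a (k + 1)) n - logAvg a n| ≤ 3 * M / H n := by
  set w : ℕ → ℝ := fun k => 1 / (k + 1 : ℝ)
  have hw_le_one (k : ℕ) : w k ≤ 1 := by
    simp only [w]; rw [div_le_one (by positivity)]; linarith [k.cast_nonneg (α := ℝ)]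
  have hw_anti (k : ℕ) : w (k + 1) ≤ w k := by
    simp only [w]; gcongr; linarith
  have hparts : ∑ k ∈ Finset.range n, w k * a (k + 1) - ∑ k ∈ Finset.range n, w k * a k
      = (w n * a n - w 0 * a 0) + ∑ k ∈ Finset.range n, (w k - w (k + 1)) * a (k + 1) := by
    rw [← Finset.sum_range_sub (fun k => w k * a k), ← Finset.sum_sub_distrib,
      ← Finset.sum_add_distrib]
    exact Finset.sum_congr rfl fun k _ => by ring
  have hM : 0 ≤ M := (abs_nonneg _).trans (ha 0)
  have hterm (k : ℕ) : |w k * a k| ≤ M := by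
    rw [abs_mul, abs_of_pos (by positivity)]
    nlinarith [hw_le_one k, ha k, abs_nonneg (a k)]
  have hends : |w n * a n - w 0 * a 0| ≤ 2 * M := by
    linarith [abs_sub (w n * a n) (w 0 * a 0), hterm n, hterm 0]
  have hmiddle : |∑ k ∈ Finset.range n, (w k - w (k + 1)) * a (k + 1)| ≤ M := calc
    _ ≤ ∑ k ∈ Finset.range n, (w k - w (k + 1)) * M := by
      refine (Finset.abs_sum_le_sum_abs _ _).trans (Finset.sum_le_sum fun k _ => ?_)
      rw [abs_mul, abs_of_nonneg (sub_nonneg.mpr (hw_anti k))]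
      exact mul_le_mul_of_nonneg_left (ha _) (sub_nonneg.mpr (hw_anti k))
    _ = (w 0 - w n) * M := by rw [← Finset.sum_mul, Finset.sum_range_sub']
    _ ≤ M := by
      have : 0 ≤ w n := by positivity
      nlinarith [hw_le_one 0]
  have := H_nonneg n
  rw [logAvg, logAvg, ← mul_sub, hparts, abs_mul, abs_of_nonneg (by positivity)]
  calc 1 / H n * |w n * a n - w 0 * a 0 + ∑ k ∈ Finset.range n, (w k - w (k + 1)) * a (k + 1)|
      ≤ 1 / H n * (2 * M + M) := by gcongr; exact (abs_add_le _ _).trans (add_le_add hends hmiddle)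
    _ = 3 * M / H n := by ring

lemma tendsto_logAvg_add_sub {a : ℕ → ℝ} {M : ℝ} (ha : ∀ k, |a k| ≤ M) (m : ℕ) :
    Tendsto (fun n => logAvg (fun k => a (k + m)) n - logAvg a n) atTop (𝓝 0) := by
  induction m generalizing a with
  | zero => simp
  | succ m ih =>
    have hsucc : Tendsto (fun n => logAvg (fun k => a (k + 1)) n - logAvg a n) atTop (𝓝 0) :=
      squeeze_zero_norm (fun n => abs_logAvg_succ_sub_le ha n)
        (tendsto_const_nhds.div_atTop tendsto_H_atTop)
    simpa [add_assoc, add_comm 1 m] using (ih fun k => ha (k + 1)).add hsucc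

end LogAverage

lemma LogMeanEquicontinuous.restrict {X : Type*} [MetricSpace X] {T : X → X}
    (hT : LogMeanEquicontinuous T) {s : Set X} (hs : Set.MapsTo T s s) :
    LogMeanEquicontinuous (Set.MapsTo.restrict T s s hs) := by
  intro ε hε
  obtain ⟨δ, hδ, hTδ⟩ := hT ε hε
  exact ⟨δ, hδ, fun y z hyz => by
    simpa only [Subtype.dist_eq, hs.coe_iterate_restrict] using hTδ y z hyz⟩

lemma BoundedContinuousFunction.exists_abs_sub_le_add_mul_dist {α : Type*} [PseudoMetricSpace α]
    (g : α →ᵇ ℝ) (hg : UniformContinuous g) {ε : ℝ} (hε : 0 < ε) :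
    ∃ K, 0 ≤ K ∧ ∀ a b, |g a - g b| ≤ ε + K * dist a b := by
  obtain ⟨η, hη, hgη⟩ := Metric.uniformContinuous_iff.mp hg ε hε
  refine ⟨2 * ‖g‖ / η, by positivity, fun a b => ?_⟩
  rw [← Real.dist_eq]
  have : 0 ≤ 2 * ‖g‖ / η * dist a b := by positivity
  rcases lt_or_ge (dist a b) η with hab | hab
  · linarith [hgη hab]
  · have : 2 * ‖g‖ ≤ 2 * ‖g‖ / η * dist a b := by
      rw [div_mul_eq_mul_div, le_div_iff₀ hη]
      gcongr
    linarith [g.dist_le_two_norm a b]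

lemma BoundedContinuousFunction.abs_apply_le_norm {α : Type*} [TopologicalSpace α]
    (g : α →ᵇ ℝ) (a : α) : |g a| ≤ ‖g‖ :=
  (Real.norm_eq_abs (g a)).symm.trans_le (g.norm_coe_le_norm a)

section Equicontinuity

variable {Y : Type*} [MetricSpace Y] [CompactSpace Y] {S : Y → Y}

lemma LogMeanEquicontinuous.eventually_abs_logAvg_sub_lt (hS : LogMeanEquicontinuous S)
    (g : Y →ᵇ ℝ) {ε : ℝ} (hε : 0 < ε) :
    ∃ δ > 0, ∀ y z : Y, dist y z < δ → ∀ᶠ n in atTop,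
      |logAvg (fun k => g (S^[k] y)) n - logAvg (fun k => g (S^[k] z)) n| < ε := by
  obtain ⟨K, hK, hgK⟩ := g.exists_abs_sub_le_add_mul_dist
    (CompactSpace.uniformContinuous_of_continuous g.continuous) (half_pos hε)
  obtain ⟨δ, hδ, hSδ⟩ := hS (ε / (2 * (K + 1))) (by positivity)
  refine ⟨δ, hδ, fun y z hyz => ?_⟩
  set D := fun n => logAvg (fun k => dist (S^[k] y) (S^[k] z)) n
  have hD : IsBoundedUnder (· ≤ ·) atTop D := isBoundedUnder_of ⟨Metric.diam (Set.univ : Set Y),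
    fun n => (le_abs_self _).trans <| abs_logAvg_le_of_abs_le (fun k => by
      rw [abs_of_nonneg dist_nonneg]
      exact Metric.dist_le_diam_of_mem isCompact_univ.isBounded trivial trivial) n⟩
  filter_upwards [eventually_lt_of_limsup_lt (hSδ y z hyz) hD, eventually_ne_atTop 0]
    with n hDn hn
  have hKD : K * D n < ε / 2 := calc
    K * D n ≤ K * (ε / (2 * (K + 1))) := by gcongr; exact hDn.le
    _ < ε / 2 := by
      rw [mul_div_assoc', div_lt_div_iff₀ (by positivity) two_pos]
      nlinarith
  calc |logAvg (fun k => g (S^[k] y)) n - logAvg (fun k => g (S^[k] z)) n|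
      ≤ logAvg (fun k => |g (S^[k] y) - g (S^[k] z)|) n := by
        rw [← logAvg_sub]; exact abs_logAvg_le _ n
    _ ≤ logAvg (fun k => ε / 2 + K * dist (S^[k] y) (S^[k] z)) n := logAvg_mono (fun k => hgK _ _) n
    _ = ε / 2 + K * D n := by rw [logAvg_add, logAvg_const hn, logAvg_const_mul]
    _ < ε := by linarith

lemma LogMeanEquicontinuous.tendsto_logAvg_sub_of_denseRange (hS : LogMeanEquicontinuous S)
    {x₀ : Y} (hx₀ : DenseRange fun n => S^[n] x₀) (g : Y →ᵇ ℝ) (y : Y) :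
    Tendsto (fun n => logAvg (fun k => g (S^[k] y)) n - logAvg (fun k => g (S^[k] x₀)) n)
      atTop (𝓝 0) := by
  refine Metric.tendsto_nhds.mpr fun ε hε => ?_
  obtain ⟨δ, hδ, hclose⟩ := hS.eventually_abs_logAvg_sub_lt g (half_pos hε)
  obtain ⟨m, hm⟩ := hx₀.exists_dist_lt y hδ
  have hshift := tendsto_logAvg_add_sub (fun k => g.abs_apply_le_norm (S^[k] x₀)) m
  simp only [Function.iterate_add_apply] at hshift
  filter_upwards [hclose _ _ hm, Metric.tendsto_nhds.mp hshift _ (half_pos hε)] with n h1 h2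
  rw [Real.dist_eq, sub_zero] at h2 ⊢
  calc _ ≤ _ := abs_sub_le _ (logAvg (fun k => g (S^[k] (S^[m] x₀))) n) _
    _ < ε / 2 + ε / 2 := add_lt_add h1 h2
    _ = ε := add_halves ε

end Equicontinuity

section ErgodicAverages

variable {Y : Type*} [MetricSpace Y] [MeasurableSpace Y] [BorelSpace Y] {S : Y → Y}

lemma integral_logAvg_comp_iterate {ν : Measure Y} [IsFiniteMeasure ν]
    (hS : MeasurePreserving S ν ν) (g : Y →ᵇ ℝ) {n : ℕ} (hn : n ≠ 0) :
    ∫ y, logAvg (fun k => g (S^[k] y)) n ∂ν = ∫ y, g y ∂ν := by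
  have hgS (k : ℕ) : Integrable (fun y => g (S^[k] y)) ν :=
    (hS.iterate k).integrable_comp_of_integrable (g.integrable ν)
  have hcomp (k : ℕ) : ∫ y, g (S^[k] y) ∂ν = ∫ y, g y ∂ν := by
    rw [← integral_map (hS.iterate k).measurable.aemeasurable
      (by rw [(hS.iterate k).map_eq]; exact g.continuous.aestronglyMeasurable),
      (hS.iterate k).map_eq]
  unfold logAvg
  rw [integral_const_mul, integral_finsetSum _ fun k _ => (hgS k).const_mul _]
  simp_rw [integral_const_mul, hcomp]
  exact logAvg_const hn _

theorem LogMeanEquicontinuous.tendsto_logAvg_integral [CompactSpace Y]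
    (hlme : LogMeanEquicontinuous S) {x₀ : Y} (hx₀ : DenseRange fun n => S^[n] x₀)
    {ν : Measure Y} [IsProbabilityMeasure ν] (hν : MeasurePreserving S ν ν) (g : Y →ᵇ ℝ) :
    Tendsto (fun n => logAvg (fun k => g (S^[k] x₀)) n) atTop (𝓝 (∫ y, g y ∂ν)) := by
  set A : ℕ → Y → ℝ := fun n y => logAvg (fun k => g (S^[k] y)) n
  have hA_meas (n : ℕ) : AEStronglyMeasurable (A n) ν :=
    ((Finset.measurable_sum _ fun k _ =>
      (g.continuous.measurable.comp (hν.measurable.iterate k)).const_mul _).const_mul _)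
      |>.aestronglyMeasurable
  have hA_le (n : ℕ) (y : Y) : |A n y| ≤ ‖g‖ :=
    abs_logAvg_le_of_abs_le (fun k => g.abs_apply_le_norm _) n
  have hDCT : Tendsto (fun n => ∫ y, (A n y - A n x₀) ∂ν) atTop (𝓝 0) := by
    simpa using tendsto_integral_of_dominated_convergence (fun _ => 2 * ‖g‖)
      (fun n => (hA_meas n).sub aestronglyMeasurable_const) (integrable_const _)
      (fun n => ae_of_all _ fun y => by
        rw [Real.norm_eq_abs, two_mul]
        exact (abs_sub _ _).trans (add_le_add (hA_le n y) (hA_le n x₀)))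
      (ae_of_all _ (hlme.tendsto_logAvg_sub_of_denseRange hx₀ g))
  have hlim := (tendsto_const_nhds (x := ∫ y, g y ∂ν)).sub hDCT
  rw [sub_zero] at hlim
  refine hlim.congr' ?_
  filter_upwards [eventually_ne_atTop 0] with n hn
  rw [integral_sub (Integrable.of_bound (hA_meas n) ‖g‖ (ae_of_all _ fun y => hA_le n y))
    (integrable_const _), integral_logAvg_comp_iterate hν g hn]
  simp [A]

end ErgodicAverages

section LogAverageMeasure

variable {Y : Type*} [MeasurableSpace Y]

noncomputable def logAvgMeasure (p : ℕ → Y) (n : ℕ) : Measure Y :=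
  ∑ k ∈ Finset.range n, ENNReal.ofReal (1 / (k + 1) / H n) • Measure.dirac (p k)

lemma isProbabilityMeasure_logAvgMeasure (p : ℕ → Y) {n : ℕ} (hn : n ≠ 0) :
    IsProbabilityMeasure (logAvgMeasure p n) := by
  constructor
  simp only [logAvgMeasure, Measure.coe_finsetSum, Finset.sum_apply, Measure.smul_apply,
    measure_univ, smul_eq_mul, mul_one]
  rw [← ENNReal.ofReal_sum_of_nonneg fun _ _ => by have := H_nonneg n; positivity,
    ← Finset.sum_div]
  exact (congrArg ENNReal.ofReal (div_self (H_pos hn).ne')).trans ENNReal.ofReal_one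

lemma integral_logAvgMeasure [MeasurableSingletonClass Y] (p : ℕ → Y) (n : ℕ) (f : Y → ℝ) :
    ∫ y, f y ∂(logAvgMeasure p n) = logAvg (fun k => f (p k)) n := by
  have := H_nonneg n
  rw [logAvgMeasure, integral_finsetSum_measure fun k _ =>
    (integrable_dirac enorm_lt_top).smul_measure ENNReal.ofReal_ne_top]
  simp_rw [integral_smul_measure, integral_dirac]
  rw [logAvg, Finset.mul_sum]
  refine Finset.sum_congr rfl fun k _ => ?_
  rw [ENNReal.toReal_ofReal (by positivity), smul_eq_mul]
  ring

end LogAverageMeasure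

section InvariantMeasures

variable {Y : Type*} [MetricSpace Y] [CompactSpace Y] [MeasurableSpace Y] [BorelSpace Y]
  {S : Y → Y}

theorem exists_probabilityMeasure_measurePreserving (hS : Continuous S)
    (x₀ : Y) : ∃ μ : ProbabilityMeasure Y, MeasurePreserving S μ μ := by
  let μs : ℕ → ProbabilityMeasure Y := fun n =>
    ⟨logAvgMeasure (fun k => S^[k] x₀) (n + 1),
      isProbabilityMeasure_logAvgMeasure _ n.succ_ne_zero⟩
  obtain ⟨μ, hμ⟩ : ∃ μ, MapClusterPt μ atTop μs := exists_clusterPt_of_compactSpace _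
  refine ⟨μ, hS.measurable, ext_of_forall_integral_eq_of_IsFiniteMeasure fun g => ?_⟩
  rw [integral_map hS.aemeasurable g.continuous.aestronglyMeasurable]
  set gS := g.compContinuous ⟨S, hS⟩
  set Φ : ProbabilityMeasure Y → ℝ := fun ν => ∫ y, gS y ∂ν - ∫ y, g y ∂ν
  have hΦ : Continuous Φ :=
    (ProbabilityMeasure.continuous_integral_boundedContinuousFunction gS).sub
      (ProbabilityMeasure.continuous_integral_boundedContinuousFunction g)
  have hΦμs : Tendsto (Φ ∘ μs) atTop (𝓝 0) := by
    refine ((tendsto_logAvg_add_sub (fun k => g.abs_apply_le_norm (S^[k] x₀)) 1).comp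
      (tendsto_add_atTop_nat 1)).congr fun n => ?_
    change _ = Φ (μs n)
    simp only [Function.comp_apply, Φ, μs, gS, ProbabilityMeasure.coe_mk, integral_logAvgMeasure,
      BoundedContinuousFunction.compContinuous_apply, ContinuousMap.coe_mk,
      Function.iterate_succ_apply']
  have : ClusterPt (Φ μ) (𝓝 0) := (hμ.continuousAt_comp hΦ.continuousAt).clusterPt.mono hΦμs
  exact sub_eq_zero.mp (eq_of_nhds_neBot this)

theorem LogMeanEquicontinuous.existsUnique_measurePreserving (hS : Continuous S)
    (hlme : LogMeanEquicontinuous S) {x₀ : Y} (hx₀ : DenseRange fun n => S^[n] x₀) :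
    ∃! μ : ProbabilityMeasure Y, MeasurePreserving S μ μ := by
  obtain ⟨μ, hμ⟩ := exists_probabilityMeasure_measurePreserving hS x₀
  refine ⟨μ, hμ, fun ν hν => ProbabilityMeasure.toMeasure_injective <|
    ext_of_forall_integral_eq_of_IsFiniteMeasure fun g =>
      tendsto_nhds_unique (hlme.tendsto_logAvg_integral hx₀ hν g)
        (hlme.tendsto_logAvg_integral hx₀ hμ g)⟩

end InvariantMeasures

lemma MeasureTheory.ProbabilityMeasure.forall_preimage_eq_iff_measurePreserving {Ω : Type*}
    [MeasurableSpace Ω] {f : Ω → Ω} (hf : Measurable f) (ν : ProbabilityMeasure Ω) :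
    (∀ B, MeasurableSet B → ν (f ⁻¹' B) = ν B) ↔ MeasurePreserving f ν ν := by
  have hcoe (B : Set Ω) : ν (f ⁻¹' B) = ν B ↔ (ν : Measure Ω) (f ⁻¹' B) = (ν : Measure Ω) B := by
    rw [← ProbabilityMeasure.ennreal_coeFn_eq_coeFn_toMeasure,
      ← ProbabilityMeasure.ennreal_coeFn_eq_coeFn_toMeasure, ENNReal.coe_inj]
  simp only [hcoe]
  exact ⟨fun h => ⟨hf, Measure.ext fun B hB => (Measure.map_apply hf hB).trans (h B hB)⟩,
    fun h B hB => (Measure.map_apply hf hB).symm.trans (by rw [h.map_eq])⟩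

lemma denseRange_iterate_restrict_orbitClosure {X : Type*} [TopologicalSpace X] {T : X → X}
    (hT : Continuous T) (x : X) :
    DenseRange fun n => (Set.MapsTo.restrict T _ _ (orbitClosure_mapsTo hT x))^[n]
      ⟨x, subset_closure ⟨0, rfl⟩⟩ := by
  refine Topology.IsInducing.subtypeVal.dense_iff.mpr fun y => ?_
  simp only [← Set.range_comp, Function.comp_def, Set.MapsTo.coe_iterate_restrict]
  exact y.2

theorem orbitClosure_uniquelyErgodic_of_logMeanEquicontinuous_general
    {X : Type*} [MetricSpace X] [CompactSpace X]
    [MeasurableSpace X] [BorelSpace X]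
    (T : X → X) (hT : Continuous T) (hlme : LogMeanEquicontinuous T) (x : X) :
    ∃ μ : ProbabilityMeasure (orbitClosure T x),
      {ν : ProbabilityMeasure (orbitClosure T x) |
        ∀ B : Set (orbitClosure T x), MeasurableSet B →
          ν (Set.MapsTo.restrict T _ _ (orbitClosure_mapsTo hT x) ⁻¹' B) = ν B} = {μ} := by
  have : CompactSpace (orbitClosure T x) :=
    isCompact_iff_compactSpace.mp isClosed_closure.isCompact
  have hS := hT.restrict (orbitClosure_mapsTo hT x)
  obtain ⟨μ, hμ, huniq⟩ := (hlme.restrict (orbitClosure_mapsTo hT x)).existsUnique_measurePreserving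
    hS (denseRange_iterate_restrict_orbitClosure hT x)
  refine ⟨μ, Set.ext fun ν => ?_⟩
  rw [Set.mem_ofPred_eq, ProbabilityMeasure.forall_preimage_eq_iff_measurePreserving hS.measurable,
    Set.mem_singleton_iff]
  exact ⟨huniq ν, fun h => h ▸ hμ⟩

/-- If `(X,T)` is logarithmically mean equicontinuous, then for every `x ∈ X` the subsystem
`(cl(orb(x,T)), T)` is uniquely ergodic: it carries exactly one invariant Borel probability
measure. -/
theorem orbitClosure_uniquelyErgodic_of_logMeanEquicontinuous
    {X : Type*} [MetricSpace X] [CompactSpace X] [Nonempty X]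
    [MeasurableSpace X] [BorelSpace X]
    (T : X → X) (hT : Continuous T) (hlme : LogMeanEquicontinuous T) (x : X) :
    ∃ μ : ProbabilityMeasure (orbitClosure T x),
      {ν : ProbabilityMeasure (orbitClosure T x) |
        ∀ B : Set (orbitClosure T x), MeasurableSet B →
          ν (Set.MapsTo.restrict T _ _ (orbitClosure_mapsTo hT x) ⁻¹' B) = ν B} = {μ} :=
  orbitClosure_uniquelyErgodic_of_logMeanEquicontinuous_general T hT hlme x
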